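/- Let 0<β<1, 0≤λ≤1 and z0∈D. If λ=1 or z0=0, then V(z0,λ,β) = {-2(1-β) log(1-λ z0)}, i.e. every f ∈ F(λ,β) satisfies log f'(z0) = -2(1-β) log(1-λ z0). In particular, when λ=1 the class F(1,β) consists of the single function f(z)=∫_0^z exp(-2(1-β) log(1-ξ)) dξ. -/

import Mathlib

/-!
For `f ∈ F(λ,β)` the function `p = (1 + z f''/f' - β) / (1 - β)` has positive real part, `p 0 = 1`
and `p' 0 = 2λ`. When `λ = 1` its Cayley transform `ω = (p - 1) / (p + 1)` maps the disk into
itself with `ω 0 = 0` and `ω' 0 = 1`, so `ω = id` by the equality case of the Schwarz lemma.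
Hence `f''/f' = 2(1-β)/(1-z)`, which determines `log f'` and, together with `f'(0) = 1` and
`f(0) = 0`, the function `f` itself. When `z₀ = 0` both sides vanish. The value is attained by
the function with `f' = (1 - λz)^(-2(1-β))`, which lies in `F(λ,β)` because for it
`1 + z f''/f' = β + (1-β)(1+λz)/(1-λz)`.
-/

open Complex Set MeasureTheory

noncomputable section

/-- The open unit disk in the complex plane. -/
def unitDisk : Set ℂ := {z : ℂ | ‖z‖ < 1}

/-- Integral of `g` along the segment from `0` to `z0`:
`∫_0^{z0} g(ξ) dξ = ∫_0^1 z0 · g(t z0) dt`. -/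
def segInt (g : ℂ → ℂ) (z0 : ℂ) : ℂ :=
  ∫ t in (0:ℝ)..1, z0 * g ((t : ℂ) * z0)

/-- The branch of `log f'` vanishing at the origin, evaluated at `z0`:
`log f'(z0) = ∫_0^{z0} f''(ξ)/f'(ξ) dξ`. -/
def logDerivAt (f : ℂ → ℂ) (z0 : ℂ) : ℂ :=
  segInt (fun ξ => deriv (deriv f) ξ / deriv f ξ) z0

/-- The class `F(λ,β)`: analytic `f` on the unit disk with `f(0)=0`, `f'(0)=1`,
`f''(0)=2λ(1-β)`, nonvanishing derivative, and `Re(1 + z f''(z)/f'(z)) > β`. -/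
def IsInF (lam beta : ℝ) (f : ℂ → ℂ) : Prop :=
  DifferentiableOn ℂ f unitDisk ∧ f 0 = 0 ∧ deriv f 0 = 1 ∧
    deriv (deriv f) 0 = 2 * (lam : ℂ) * (1 - (beta : ℂ)) ∧
    (∀ z ∈ unitDisk, deriv f z ≠ 0) ∧
    (∀ z ∈ unitDisk, beta < (1 + z * deriv (deriv f) z / deriv f z).re)

/-- The region of variability `V(z0,λ,β) = {log f'(z0) : f ∈ F(λ,β)}`. -/
def V (z0 : ℂ) (lam beta : ℝ) : Set ℂ :=
  {w : ℂ | ∃ f : ℂ → ℂ, IsInF lam beta f ∧ logDerivAt f z0 = w}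

open Metric Filter Topology

lemma unitDisk_eq_ball : unitDisk = ball (0 : ℂ) 1 := by
  ext z
  simp [unitDisk]

lemma isOpen_unitDisk : IsOpen unitDisk := unitDisk_eq_ball ▸ isOpen_ball

lemma isPreconnected_unitDisk : IsPreconnected unitDisk :=
  unitDisk_eq_ball ▸ (convex_ball (0 : ℂ) 1).isPreconnected

lemma zero_mem_unitDisk : (0 : ℂ) ∈ unitDisk := by
  simp [unitDisk]

lemma mul_mem_unitDisk {a z : ℂ} (ha : ‖a‖ ≤ 1) (hz : z ∈ unitDisk) : a * z ∈ unitDisk := by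
  have hz' : ‖z‖ < 1 := hz
  show ‖a * z‖ < 1
  rw [norm_mul]
  exact (mul_le_of_le_one_left (norm_nonneg z) ha).trans_lt hz'

lemma one_sub_mem_slitPlane {w : ℂ} (hw : w ∈ unitDisk) : 1 - w ∈ slitPlane := by
  have hw' : ‖w‖ < 1 := hw
  refine mem_slitPlane_iff.mpr (Or.inl ?_)
  rw [sub_re, one_re, sub_pos]
  exact (re_le_norm w).trans_lt hw'

@[simp]
lemma segInt_zero_right (g : ℂ → ℂ) : segInt g 0 = 0 := by
  simp [segInt]

lemma segInt_eq_sub {h H : ℂ → ℂ} (hH : ∀ w ∈ unitDisk, HasDerivAt H (h w) w)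
    (hh : ContinuousOn h unitDisk) {z : ℂ} (hz : z ∈ unitDisk) :
    segInt h z = H z - H 0 := by
  have hseg : ∀ t ∈ uIcc (0 : ℝ) 1, (t : ℂ) * z ∈ unitDisk := by
    intro t ht
    rw [uIcc_of_le zero_le_one] at ht
    refine mul_mem_unitDisk ?_ hz
    rw [norm_real, Real.norm_eq_abs, abs_le]
    constructor <;> linarith [ht.1, ht.2]
  have hderiv : ∀ t ∈ uIcc (0 : ℝ) 1,
      HasDerivAt (fun s : ℝ => H (s * z)) (z * h (t * z)) t := fun t ht =>
    (((hH _ (hseg t ht)).comp (t : ℂ) (hasDerivAt_mul_const z)).comp_ofReal).congr_deriv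
      (mul_comm _ _)
  have hcont : ContinuousOn (fun t : ℝ => z * h (t * z)) (uIcc 0 1) :=
    continuousOn_const.mul (hh.comp (by fun_prop) hseg)
  rw [segInt, intervalIntegral.integral_eq_sub_of_hasDerivAt hderiv hcont.intervalIntegrable]
  simp

lemma hasDerivAt_segInt {h : ℂ → ℂ} (hh : DifferentiableOn ℂ h unitDisk) {z : ℂ}
    (hz : z ∈ unitDisk) : HasDerivAt (segInt h) (h z) z := by
  obtain ⟨H, hH⟩ := (unitDisk_eq_ball ▸ hh).isExactOn_ball
  rw [← unitDisk_eq_ball] at hH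
  have hsegInt : segInt h =ᶠ[𝓝 z] fun w => H w - H 0 :=
    eventually_of_mem (isOpen_unitDisk.mem_nhds hz) fun w hw =>
      segInt_eq_sub hH hh.continuousOn hw
  exact ((hH z hz).sub_const _).congr_of_eventuallyEq hsegInt

lemma hasDerivAt_mul_log_one_sub_mul (c a : ℂ) {z : ℂ} (hz : 1 - a * z ∈ slitPlane) :
    HasDerivAt (fun w => c * log (1 - a * w)) (-(c * a) / (1 - a * z)) z := by
  have hinner : HasDerivAt (fun w => 1 - a * w) (-a) z := by
    simpa using ((hasDerivAt_id z).const_mul a).const_sub 1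
  refine (((hasDerivAt_log hz).comp z hinner).const_mul c).congr_deriv ?_
  field_simp

lemma logDerivAt_eq_of_logDeriv_deriv_eq {f : ℂ → ℂ} {c a : ℂ} (ha : ‖a‖ ≤ 1)
    (hf : DifferentiableOn ℂ f unitDisk) (hf' : ∀ z ∈ unitDisk, deriv f z ≠ 0)
    (h : ∀ z ∈ unitDisk, logDeriv (deriv f) z = -(c * a) / (1 - a * z)) {z0 : ℂ}
    (hz0 : z0 ∈ unitDisk) : logDerivAt f z0 = c * log (1 - a * z0) := by
  have hcont : ContinuousOn (logDeriv (deriv f)) unitDisk :=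
    ((hf.deriv isOpen_unitDisk).deriv isOpen_unitDisk).continuousOn.div
      (hf.deriv isOpen_unitDisk).continuousOn hf'
  have hprim : ∀ w ∈ unitDisk,
      HasDerivAt (fun w => c * log (1 - a * w)) (logDeriv (deriv f) w) w := fun w hw =>
    h w hw ▸ hasDerivAt_mul_log_one_sub_mul c a (one_sub_mem_slitPlane (mul_mem_unitDisk ha hw))
  rw [logDerivAt, ← funext (logDeriv_apply (deriv f)), segInt_eq_sub hprim hcont hz0]
  simp

lemma norm_sub_one_le_norm_add_one {p : ℂ} (hp : 0 ≤ p.re) : ‖p - 1‖ ≤ ‖p + 1‖ := by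
  rw [← sq_le_sq₀ (norm_nonneg _) (norm_nonneg _), Complex.sq_norm, Complex.sq_norm, normSq_apply,
    normSq_apply]
  simp only [sub_re, add_re, sub_im, add_im, one_re, one_im]
  nlinarith

lemma re_one_add_div_one_sub_pos {w : ℂ} (hw : ‖w‖ < 1) : 0 < ((1 + w) / (1 - w)).re := by
  have hne : 1 - w ≠ 0 := by
    rintro h
    rw [← sub_eq_zero.mp h, norm_one] at hw
    exact lt_irrefl 1 hw
  have hlt : normSq w < 1 := by
    rw [← Complex.sq_norm]
    nlinarith [norm_nonneg w]
  have hre : (1 + w).re * (1 - w).re + (1 + w).im * (1 - w).im = 1 - normSq w := by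
    simp only [normSq_apply, add_re, sub_re, add_im, sub_im, one_re, one_im]
    ring
  rw [div_re, ← add_div, hre]
  exact div_pos (by linarith) (normSq_pos.mpr hne)

lemma eqOn_id_of_mapsTo_of_deriv_eq_one {ω : ℂ → ℂ} (hω : DifferentiableOn ℂ ω (ball 0 1))
    (hmaps : MapsTo ω (ball 0 1) (closedBall 0 1)) (hω0 : ω 0 = 0) (hω0' : deriv ω 0 = 1) :
    EqOn ω id (ball 0 1) := by
  have hslope : ‖dslope ω 0 0‖ = 1 / 1 := by
    rw [dslope_same, hω0', norm_one, div_one]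
  have hmaps' : MapsTo ω (ball 0 1) (closedBall (ω 0) 1) := by rwa [hω0]
  intro z hz
  have := Complex.affine_of_mapsTo_ball_of_norm_dslope_eq_div hω hmaps'
    (mem_ball_self one_pos) hslope hz
  simpa [hω0, hω0'] using this

lemma mul_one_sub_eq_one_add_of_deriv_eq_two {p : ℂ → ℂ} (hp : DifferentiableOn ℂ p (ball 0 1))
    (hre : ∀ z ∈ ball (0 : ℂ) 1, 0 < (p z).re) (hp0 : p 0 = 1) (hp0' : deriv p 0 = 2) :
    ∀ z ∈ ball (0 : ℂ) 1, p z * (1 - z) = 1 + z := by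
  have hp1 : ∀ z ∈ ball (0 : ℂ) 1, p z + 1 ≠ 0 := fun z hz h => by
    have := hre z hz
    rw [eq_neg_of_add_eq_zero_left h, neg_re, one_re] at this
    linarith
  set ω : ℂ → ℂ := fun z => (p z - 1) / (p z + 1)
  have hω : DifferentiableOn ℂ ω (ball 0 1) := (hp.sub_const 1).div (hp.add_const 1) hp1
  have hmaps : MapsTo ω (ball 0 1) (closedBall 0 1) := fun z hz => by
    rw [mem_closedBall_zero_iff, norm_div, div_le_one (norm_pos_iff.mpr (hp1 z hz))]
    exact norm_sub_one_le_norm_add_one (hre z hz).le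
  have hω0' : deriv ω 0 = 1 := by
    have hpd := (hp.differentiableAt (isOpen_ball.mem_nhds (mem_ball_self one_pos))).hasDerivAt
    rw [((hpd.sub_const 1).fun_div (hpd.add_const 1) (hp1 0 (mem_ball_self one_pos))).deriv,
      hp0, hp0']
    norm_num
  intro z hz
  have hωz : (p z - 1) / (p z + 1) = z :=
    eqOn_id_of_mapsTo_of_deriv_eq_one hω hmaps (by simp [ω, hp0]) hω0' hz
  rw [div_eq_iff (hp1 z hz)] at hωz
  linear_combination hωz

lemma eqOn_of_logDeriv_deriv_eqOn {s : Set ℂ} (hs : IsOpen s) (hs' : IsPreconnected s)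
    {f g : ℂ → ℂ} (hf : DifferentiableOn ℂ f s) (hg : DifferentiableOn ℂ g s)
    (hf' : ∀ z ∈ s, deriv f z ≠ 0) (hg' : ∀ z ∈ s, deriv g z ≠ 0)
    (h : EqOn (logDeriv (deriv f)) (logDeriv (deriv g)) s) {x : ℂ} (hx : x ∈ s)
    (hfgx : f x = g x) (hfgx' : deriv f x = deriv g x) : EqOn f g s := by
  obtain ⟨k, -, hk⟩ := (logDeriv_eqOn_iff (hf.deriv hs) (hg.deriv hs) hs hs' hg' hf').mp h
  have hk1 : k = 1 := by
    have := hk hx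
    rw [Pi.smul_apply, smul_eq_mul, hfgx'] at this
    exact (mul_eq_right₀ (hg' x hx)).mp this.symm
  refine hs.eqOn_of_deriv_eq hs' hf hg (fun z hz => ?_) hx hfgx
  simpa [hk1] using hk hz

def extremalDeriv (c a : ℂ) (z : ℂ) : ℂ := exp (c * log (1 - a * z))

/-- For `c = -2(1-β)` and `a = λ` this is the extremal function `f_λ` of the class `F(λ,β)`. -/
def extremal (c a : ℂ) : ℂ → ℂ := segInt (extremalDeriv c a)

section Extremal

variable {c a : ℂ}

lemma hasDerivAt_extremalDeriv (ha : ‖a‖ ≤ 1) {z : ℂ} (hz : z ∈ unitDisk) :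
    HasDerivAt (extremalDeriv c a) (extremalDeriv c a z * (-(c * a) / (1 - a * z))) z :=
  (hasDerivAt_mul_log_one_sub_mul c a
    (one_sub_mem_slitPlane (mul_mem_unitDisk ha hz))).cexp

lemma hasDerivAt_extremal (ha : ‖a‖ ≤ 1) {z : ℂ} (hz : z ∈ unitDisk) :
    HasDerivAt (extremal c a) (extremalDeriv c a z) z :=
  hasDerivAt_segInt (fun _ hw => (hasDerivAt_extremalDeriv ha hw).differentiableAt
    |>.differentiableWithinAt) hz

lemma deriv_extremal_eventuallyEq (ha : ‖a‖ ≤ 1) {z : ℂ} (hz : z ∈ unitDisk) :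
    deriv (extremal c a) =ᶠ[𝓝 z] extremalDeriv c a :=
  eventually_of_mem (isOpen_unitDisk.mem_nhds hz) fun _ hw => (hasDerivAt_extremal ha hw).deriv

lemma logDeriv_deriv_extremal (ha : ‖a‖ ≤ 1) {z : ℂ} (hz : z ∈ unitDisk) :
    logDeriv (deriv (extremal c a)) z = -(c * a) / (1 - a * z) := by
  have hE : extremalDeriv c a z ≠ 0 := exp_ne_zero _
  rw [(logDeriv_congr_nhds (deriv_extremal_eventuallyEq ha hz)).eq_of_nhds, logDeriv_apply,
    (hasDerivAt_extremalDeriv ha hz).deriv, mul_div_cancel_left₀ _ hE]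

lemma isInF_extremal {beta lam : ℝ} (hbeta : beta < 1) (hlam : ‖(lam : ℂ)‖ ≤ 1) :
    IsInF lam beta (extremal (-2 * (1 - beta)) lam) := by
  have hderiv : ∀ z ∈ unitDisk, deriv (extremal (-2 * (1 - beta)) lam) z
      = extremalDeriv (-2 * (1 - beta)) lam z := fun z hz => (hasDerivAt_extremal hlam hz).deriv
  have hderiv2 : ∀ z ∈ unitDisk, deriv (deriv (extremal (-2 * (1 - beta)) lam)) z
      = deriv (extremal (-2 * (1 - beta)) lam) z * (2 * lam * (1 - beta) / (1 - lam * z)) := by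
    intro z hz
    have := logDeriv_deriv_extremal (c := -2 * (1 - beta)) hlam hz
    rw [logDeriv_apply, div_eq_iff (hderiv z hz ▸ exp_ne_zero _)] at this
    rw [this]
    ring
  refine ⟨fun z hz => (hasDerivAt_extremal hlam hz).differentiableAt.differentiableWithinAt,
    segInt_zero_right _, ?_, ?_, fun z hz => hderiv z hz ▸ exp_ne_zero _, fun z hz => ?_⟩
  · rw [hderiv 0 zero_mem_unitDisk]
    simp [extremalDeriv]
  · rw [hderiv2 0 zero_mem_unitDisk, hderiv 0 zero_mem_unitDisk]
    simp [extremalDeriv]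
  · have hne : 1 - z * lam ≠ 0 := mul_comm z (lam : ℂ) ▸
      slitPlane_ne_zero (one_sub_mem_slitPlane (mul_mem_unitDisk hlam hz))
    have hform : 1 + z * deriv (deriv (extremal (-2 * (1 - beta)) lam)) z
        / deriv (extremal (-2 * (1 - beta)) lam) z
        = beta + ((1 - beta : ℝ) : ℂ) * ((1 + lam * z) / (1 - lam * z)) := by
      have hE : extremalDeriv (-2 * (1 - beta)) lam z ≠ 0 := exp_ne_zero _
      rw [hderiv2 z hz, mul_div_assoc, mul_div_cancel_left₀ _ (hderiv z hz ▸ hE)]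
      field_simp
      push_cast
      ring
    have hpos := re_one_add_div_one_sub_pos (mul_mem_unitDisk hlam hz)
    rw [hform, add_re, ofReal_re, re_ofReal_mul]
    nlinarith

end Extremal

lemma logDerivAt_extremal {c a : ℂ} (ha : ‖a‖ ≤ 1) {z0 : ℂ} (hz0 : z0 ∈ unitDisk) :
    logDerivAt (extremal c a) z0 = c * log (1 - a * z0) :=
  logDerivAt_eq_of_logDeriv_deriv_eq ha
    (fun _ hz => (hasDerivAt_extremal ha hz).differentiableAt.differentiableWithinAt)
    (fun _ hz => (hasDerivAt_extremal ha hz).deriv ▸ exp_ne_zero _)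
    (fun _ hz => logDeriv_deriv_extremal ha hz) hz0

lemma logDeriv_deriv_of_isInF_one {beta : ℝ} (hbeta : beta < 1) {f : ℂ → ℂ}
    (hf : IsInF 1 beta f) : ∀ z ∈ unitDisk, logDeriv (deriv f) z = 2 * (1 - beta) / (1 - z) := by
  obtain ⟨hdiff, -, hf0', hf0'', hne, hre⟩ := hf
  have hβ : (1 - beta : ℂ) ≠ 0 := by exact_mod_cast (sub_pos.mpr hbeta).ne'
  set u := logDeriv (deriv f)
  have hu : DifferentiableOn ℂ u unitDisk :=
    ((hdiff.deriv isOpen_unitDisk).deriv isOpen_unitDisk).div (hdiff.deriv isOpen_unitDisk) hne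
  have hu0 : u 0 = 2 * (1 - beta) := by simp [u, logDeriv_apply, hf0', hf0'']
  set p : ℂ → ℂ := fun z => (1 + z * u z - beta) / (1 - beta)
  have hp : DifferentiableOn ℂ p unitDisk :=
    (((differentiableOn_id.mul hu).const_add 1).sub_const _).div_const _
  have hp_re : ∀ z ∈ unitDisk, 0 < (p z).re := by
    intro z hz
    have h := hre z hz
    rw [mul_div_assoc, ← logDeriv_apply] at h
    have hpz : p z = (1 + z * u z - beta) / ((1 - beta : ℝ) : ℂ) := by push_cast; rfl
    rw [hpz, div_ofReal_re, sub_re, ofReal_re]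
    exact div_pos (by linarith) (by linarith)
  have hp0 : p 0 = 1 := by simp [p, hβ]
  have hp0' : deriv p 0 = 2 := by
    have hud := (hu.differentiableAt (isOpen_unitDisk.mem_nhds zero_mem_unitDisk)).hasDerivAt
    rw [((((hasDerivAt_id' 0).fun_mul hud).const_add 1).sub_const (beta : ℂ)).div_const
      (1 - beta : ℂ) |>.deriv]
    simp [hu0]
    field_simp
  rw [unitDisk_eq_ball] at hp hp_re
  intro z hz
  rw [eq_div_iff (slitPlane_ne_zero (one_sub_mem_slitPlane hz))]
  rcases eq_or_ne z 0 with rfl | hz0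
  · simp [hu0]
  · have hpz := mul_one_sub_eq_one_add_of_deriv_eq_two hp hp_re hp0 hp0' z (unitDisk_eq_ball ▸ hz)
    simp only [p] at hpz
    rw [div_mul_eq_mul_div, div_eq_iff hβ] at hpz
    apply mul_left_cancel₀ hz0
    linear_combination hpz

lemma eqOn_extremal_of_isInF_one {beta : ℝ} (hbeta : beta < 1) {f : ℂ → ℂ}
    (hf : IsInF 1 beta f) : EqOn f (extremal (-2 * (1 - beta)) (1 : ℝ)) unitDisk := by
  have hone : ‖((1 : ℝ) : ℂ)‖ ≤ 1 := by simp
  have hext := isInF_extremal hbeta hone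
  refine eqOn_of_logDeriv_deriv_eqOn isOpen_unitDisk isPreconnected_unitDisk hf.1 hext.1
    hf.2.2.2.2.1 hext.2.2.2.2.1 (fun z hz => ?_) zero_mem_unitDisk (hf.2.1.trans hext.2.1.symm)
    (hf.2.2.1.trans hext.2.2.1.symm)
  rw [logDeriv_deriv_of_isInF_one hbeta hf z hz, logDeriv_deriv_extremal hone hz]
  push_cast
  ring

/-- if `λ = 1` or `z0 = 0` then `V(z0,λ,β) = {-2(1-β) log(1-λ z0)}`;
in particular for `λ = 1` the class `F(1,β)` consists of the single function
`f(z) = ∫_0^z exp(-2(1-β) log(1-ξ)) dξ`. -/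
theorem V_degenerate (beta lam : ℝ) (hbeta : 0 < beta ∧ beta < 1)
    (hlam : 0 ≤ lam ∧ lam ≤ 1) (z0 : ℂ) (hz0 : z0 ∈ unitDisk)
    (hdeg : lam = 1 ∨ z0 = 0) :
    V z0 lam beta = {-2 * (1 - (beta : ℂ)) * Complex.log (1 - (lam : ℂ) * z0)} ∧
      (lam = 1 →
        (IsInF 1 beta
          (fun z => segInt (fun ξ => Complex.exp (-2 * (1 - (beta : ℂ)) * Complex.log (1 - ξ))) z)) ∧
        ∀ f : ℂ → ℂ, IsInF 1 beta f →
          Set.EqOn f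
            (fun z => segInt (fun ξ => Complex.exp (-2 * (1 - (beta : ℂ)) * Complex.log (1 - ξ))) z)
            unitDisk) := by
  have hb1 := hbeta.2
  have hlam' : ‖(lam : ℂ)‖ ≤ 1 := by
    rw [norm_real, Real.norm_eq_abs, abs_le]
    constructor <;> linarith [hlam.1, hlam.2]
  have hextremal_one : (fun z => segInt (fun ξ => exp (-2 * (1 - (beta : ℂ)) * log (1 - ξ))) z)
      = extremal (-2 * (1 - beta)) (1 : ℝ) := by
    funext z
    simp only [extremal, ofReal_one]
    congr 1
    funext ξ
    rw [extremalDeriv, one_mul]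
  refine ⟨eq_singleton_iff_unique_mem.mpr
    ⟨⟨_, isInF_extremal hb1 hlam', logDerivAt_extremal hlam' hz0⟩, ?_⟩, fun h1 => ?_⟩
  · rintro _ ⟨f, hf, rfl⟩
    rcases hdeg with rfl | rfl
    · refine logDerivAt_eq_of_logDeriv_deriv_eq hlam' hf.1 hf.2.2.2.2.1 (fun z hz => ?_) hz0
      rw [logDeriv_deriv_of_isInF_one hb1 hf z hz]
      push_cast
      ring
    · simp [logDerivAt]
  · subst h1
    rw [hextremal_one]
    exact ⟨isInF_extremal hb1 hlam', fun f hf => eqOn_extremal_of_isInF_one hb1 hf⟩
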